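/- arXiv:1507.02050 — 4 statements merged into one kernel-verified Lean document; each statement's English description precedes it below -/
import Mathlib

section
/- Coupling lemma. Let m, m' ≥ 1 be integers, F : 𝔸^m → 𝔸^m and G : 𝔸^{m'} → 𝔸^{m'} be diffeomorphisms, and f : 𝔸^m → ℝ and g : 𝔸^{m'} → ℝ be C^∞ Hamiltonians generating complete Hamiltonian vector fields. Suppose that q ≥ 1 is an integer and 𝒱 ⊂ 𝔸^{m'} satisfies G^q(𝒱) = 𝒱 together with the synchronization conditions: for all x' ∈ 𝒱, g(x') = 1, dg(x') = 0, and g(G^s(x')) = 0, dg(G^s(x')) = 0 for 1 ≤ s ≤ q−1. Then the function f⊗g generates a complete Hamiltonian vector field and the diffeomorphism ℱ := Φ^{f⊗g} ∘ (F×G) of 𝔸^{m+m'} satisfies ℱ^{ℓq+s}(x,x') = (F^s ∘ (Φ^f ∘ F^q)^ℓ (x), G^{ℓq+s}(x')) for all x ∈ 𝔸^m, x' ∈ 𝒱, and all integers ℓ, s with 0 ≤ s ≤ q−1. -/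
open scoped BigOperators ENNReal

noncomputable section


/-- Lift of the phase space `𝔸ᵏ = 𝕋ᵏ × ℝᵏ`. -/
abbrev PS (n : ℕ) := (Fin n → ℝ) × (Fin n → ℝ)

/-- Translation by `ℓ ∈ ℤᵏ` in the angle variables. -/
def ztrans {n : ℕ} (ℓ : Fin n → ℤ) (x : PS n) : PS n :=
  (x.1 + fun i => (ℓ i : ℝ), x.2)

/-- `ℤᵏ`-periodicity in the angle variables. -/
def ZnPeriodic {n : ℕ} (f : PS n → ℝ) : Prop := ∀ x ℓ, f (ztrans ℓ x) = f x

/-- A lift of a map of `𝔸ᵏ` homotopic to the identity. -/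
def EquivariantMap {n : ℕ} (Ψ : PS n → PS n) : Prop :=
  ∀ x ℓ, Ψ (ztrans ℓ x) = ztrans ℓ (Ψ x)

/-- Hamiltonian vector field `X_H = (∂H/∂r, -∂H/∂θ)` on (the lift of) `𝔸ᵏ`. -/
noncomputable def hamVF {n : ℕ} (H : PS n → ℝ) (x : PS n) : PS n :=
  ((fun i => fderiv ℝ H x (0, Pi.single i 1)),
   (fun i => -fderiv ℝ H x (Pi.single i 1, 0)))

/-- `Φ` is the (complete) flow of the Hamiltonian vector field of `H`. -/
def IsHamFlow {n : ℕ} (H : PS n → ℝ) (Φ : ℝ → PS n → PS n) : Prop :=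
  (∀ x, Φ 0 x = x) ∧ ∀ x t, HasDerivAt (fun s => Φ s x) (hamVF H (Φ t x)) t

/-- `φ` is the time-one map `Φ^H` of the (complete) Hamiltonian flow of `H`. -/
def IsTimeOne {n : ℕ} (H : PS n → ℝ) (φ : PS n → PS n) : Prop :=
  ∃ Φ, IsHamFlow H Φ ∧ φ = Φ 1

/-- Hamiltonian vector field on (the lift of) `𝔸^{m+m'} = 𝔸^m × 𝔸^{m'}`. -/
noncomputable def hamVFP {m m' : ℕ} (H : PS m × PS m' → ℝ) (z : PS m × PS m') :
    PS m × PS m' :=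
  (((fun i => fderiv ℝ H z ((0, Pi.single i 1), 0)),
    (fun i => -fderiv ℝ H z ((Pi.single i 1, 0), 0))),
   ((fun i => fderiv ℝ H z (0, (0, Pi.single i 1))),
    (fun i => -fderiv ℝ H z (0, (Pi.single i 1, 0)))))

/-- `Φ` is the (complete) flow of the Hamiltonian vector field of `H` on `𝔸^m × 𝔸^{m'}`. -/
def IsHamFlowP {m m' : ℕ} (H : PS m × PS m' → ℝ)
    (Φ : ℝ → PS m × PS m' → PS m × PS m') : Prop :=
  (∀ z, Φ 0 z = z) ∧ ∀ z t, HasDerivAt (fun s => Φ s z) (hamVFP H (Φ t z)) t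

/-- `φ` is the time-one map of the (complete) Hamiltonian flow of `H` on `𝔸^m × 𝔸^{m'}`. -/
def IsTimeOneP {m m' : ℕ} (H : PS m × PS m' → ℝ) (φ : PS m × PS m' → PS m × PS m') :
    Prop :=
  ∃ Φ, IsHamFlowP H Φ ∧ φ = Φ 1

/-- `ℤ`-indexed iterates of an invertible map. -/
def zIter {X : Type*} (T Tinv : X → X) (k : ℤ) : X → X :=
  if 0 ≤ k then T^[k.toNat] else Tinv^[(-k).toNat]

lemma sum_single (n : ℕ) (c : Fin n → ℝ) :
    ∑ i, c i • (Pi.single i 1 : Fin n → ℝ) = c := by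
  have : ∀ i, c i • (Pi.single i 1 : Fin n → ℝ) = Pi.single i (c i) := by
    intro i; ext j; by_cases h : j = i <;> simp [Pi.single_apply, h]
  simp_rw [this]; exact Finset.univ_sum_single c

lemma clm_decomp {n : ℕ} (L : PS n →L[ℝ] ℝ) (a b : Fin n → ℝ) :
    L (a, b) = ∑ i, a i * L (Pi.single i 1, 0) + ∑ i, b i * L (0, Pi.single i 1) := by
  have h1 : ((a, b) : PS n)
      = (∑ i, a i • ((Pi.single i 1 : Fin n → ℝ), (0 : Fin n → ℝ)))
        + ∑ i, b i • ((0 : Fin n → ℝ), (Pi.single i 1 : Fin n → ℝ)) := by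
    rw [Prod.ext_iff]
    constructor <;> simp [Prod.fst_sum, Prod.snd_sum, sum_single]
  rw [h1, map_add, map_sum, map_sum]
  simp only [map_smul, smul_eq_mul]

lemma cancel {n : ℕ} (f : PS n → ℝ) (x : PS n) :
    fderiv ℝ f x (hamVF f x) = 0 := by
  rw [show hamVF f x = ((fun i => fderiv ℝ f x (0, Pi.single i 1)),
    (fun i => -fderiv ℝ f x (Pi.single i 1, 0))) from rfl, clm_decomp,
    ← Finset.sum_add_distrib]
  apply Finset.sum_eq_zero; intro i _; ring

lemma contDiff_hamVF {n : ℕ} {f : PS n → ℝ} (hf : ContDiff ℝ (⊤ : ℕ∞) f) :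
    ContDiff ℝ (⊤ : ℕ∞) (hamVF f) := by
  have h1 : ContDiff ℝ (⊤ : ℕ∞) (fun x => fderiv ℝ f x) := hf.fderiv_right (by simp)
  exact ContDiff.prodMk
    (contDiff_pi.mpr fun i => h1.clm_apply contDiff_const)
    (contDiff_pi.mpr fun i => (h1.clm_apply contDiff_const).neg)



lemma flow_unique {E : Type*} [NormedAddCommGroup E] [NormedSpace ℝ E] {v : E → E}
    (hv : ∀ y : E, ∃ K, ∃ s ∈ nhds y, LipschitzOnWith K v s)
    {γ γ' : ℝ → E} (hγ : ∀ t, HasDerivAt γ (v (γ t)) t)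
    (hγ' : ∀ t, HasDerivAt γ' (v (γ' t)) t) (h : γ 0 = γ' 0) : ∀ t, γ t = γ' t := by
  have hc : Continuous γ := by
    rw [continuous_iff_continuousAt]; exact fun t => (hγ t).continuousAt
  have hc' : Continuous γ' := by
    rw [continuous_iff_continuousAt]; exact fun t => (hγ' t).continuousAt
  set S : Set ℝ := {t | γ t = γ' t} with hS
  have hclosed : IsClosed S := isClosed_eq hc hc'
  have hopen : IsOpen S := by
    rw [isOpen_iff_mem_nhds]
    intro t₁ ht₁
    obtain ⟨K, s, hs, hlip⟩ := hv (γ t₁)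
    have heq : γ =ᶠ[nhds t₁] γ' := by
      apply ODE_solution_unique_of_eventually (v := fun _ : ℝ => v)
        (s := fun _ : ℝ => s) (t₀ := t₁) (Filter.Eventually.of_forall fun _ => hlip)
      · have hmem : γ ⁻¹' s ∈ nhds t₁ := hc.continuousAt.preimage_mem_nhds hs
        exact Filter.eventually_iff_exists_mem.mpr ⟨_, hmem, fun t ht => ⟨hγ t, ht⟩⟩
      · have hmem : γ' ⁻¹' s ∈ nhds t₁ := by
          apply hc'.continuousAt.preimage_mem_nhds
          rw [← ht₁]; exact hs
        exact Filter.eventually_iff_exists_mem.mpr ⟨_, hmem, fun t ht => ⟨hγ' t, ht⟩⟩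
      · exact ht₁
    exact heq.mono fun t ht => ht
  have : S = Set.univ := IsClopen.eq_univ ⟨hclosed, hopen⟩ ⟨0, h⟩
  intro t
  exact Set.eq_univ_iff_forall.mp this t

lemma conserved {n : ℕ} {f : PS n → ℝ} (hf : ContDiff ℝ (⊤ : ℕ∞) f) {Φ : ℝ → PS n → PS n}
    (hΦ : IsHamFlow f Φ) (x : PS n) (t : ℝ) : f (Φ t x) = f x := by
  have hd : ∀ s, HasDerivAt (fun u => f (Φ u x)) 0 s := by
    intro s
    have h1 : HasDerivAt (fun u => f (Φ u x))
        (fderiv ℝ f (Φ s x) (hamVF f (Φ s x))) s :=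
      (hf.differentiable (by simp) (Φ s x)).hasFDerivAt.comp_hasDerivAt s (hΦ.2 x s)
    rwa [cancel] at h1
  have : f (Φ t x) = f (Φ 0 x) := by
    apply is_const_of_deriv_eq_zero (fun s => (hd s).differentiableAt)
    intro s; exact (hd s).deriv
  rw [this, hΦ.1]

lemma hamVF_zero {n : ℕ} {g : PS n → ℝ} {x : PS n} (h : fderiv ℝ g x = 0) :
    hamVF g x = 0 := by
  simp [hamVF, h]
  rfl

lemma hamVFP_eq {m m' : ℕ} {f : PS m → ℝ} {g : PS m' → ℝ}
    (hf : ContDiff ℝ (⊤ : ℕ∞) f) (hg : ContDiff ℝ (⊤ : ℕ∞) g) (z : PS m × PS m') :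
    hamVFP (fun z : PS m × PS m' => f z.1 * g z.2) z
      = (g z.2 • hamVF f z.1, f z.1 • hamVF g z.2) := by
  have hc : HasFDerivAt (fun z : PS m × PS m' => f z.1)
      ((fderiv ℝ f z.1).comp (ContinuousLinearMap.fst ℝ (PS m) (PS m'))) z :=
    ((hf.differentiable (by simp) z.1).hasFDerivAt).comp z (hasFDerivAt_fst)
  have hd : HasFDerivAt (fun z : PS m × PS m' => g z.2)
      ((fderiv ℝ g z.2).comp (ContinuousLinearMap.snd ℝ (PS m) (PS m'))) z :=
    ((hg.differentiable (by simp) z.2).hasFDerivAt).comp z (hasFDerivAt_snd)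
  have hD : fderiv ℝ (fun z : PS m × PS m' => f z.1 * g z.2) z = _ := (hc.mul hd).fderiv
  unfold hamVFP
  rw [hD]
  ext i <;>
  simp [hamVF, Prod.smul_fst, Prod.smul_snd, smul_eq_mul, mul_comm]

section
variable {m m' : ℕ} {f : PS m → ℝ} {g : PS m' → ℝ}

lemma contDiff_hamVFP (hf : ContDiff ℝ (⊤ : ℕ∞) f) (hg : ContDiff ℝ (⊤ : ℕ∞) g) :
    ContDiff ℝ (⊤ : ℕ∞) (hamVFP (fun z : PS m × PS m' => f z.1 * g z.2)) := by
  have hH : ContDiff ℝ (⊤ : ℕ∞) (fun z : PS m × PS m' => f z.1 * g z.2) :=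
    (hf.comp contDiff_fst).mul (hg.comp contDiff_snd)
  have h1 : ContDiff ℝ (⊤ : ℕ∞) (fun z => fderiv ℝ (fun z : PS m × PS m' => f z.1 * g z.2) z) :=
    hH.fderiv_right (by simp)
  unfold hamVFP
  exact ContDiff.prodMk
    (ContDiff.prodMk (contDiff_pi.mpr fun i => h1.clm_apply contDiff_const)
      (contDiff_pi.mpr fun i => (h1.clm_apply contDiff_const).neg))
    (ContDiff.prodMk (contDiff_pi.mpr fun i => h1.clm_apply contDiff_const)
      (contDiff_pi.mpr fun i => (h1.clm_apply contDiff_const).neg))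

lemma lipVFP (hf : ContDiff ℝ (⊤ : ℕ∞) f) (hg : ContDiff ℝ (⊤ : ℕ∞) g) :
    ∀ y : PS m × PS m', ∃ K, ∃ s ∈ nhds y,
      LipschitzOnWith K (hamVFP (fun z : PS m × PS m' => f z.1 * g z.2)) s :=
  fun y => ((contDiff_hamVFP hf hg).contDiffAt (x := y)).of_le
    (by exact_mod_cast le_top) |>.exists_lipschitzOnWith

lemma flow_exists (hf : ContDiff ℝ (⊤ : ℕ∞) f) (hg : ContDiff ℝ (⊤ : ℕ∞) g)
    {Φf : ℝ → PS m → PS m} (hΦf : IsHamFlow f Φf)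
    {Φg : ℝ → PS m' → PS m'} (hΦg : IsHamFlow g Φg) :
    IsHamFlowP (fun z : PS m × PS m' => f z.1 * g z.2)
      (fun t z => (Φf (g z.2 * t) z.1, Φg (f z.1 * t) z.2)) := by
  constructor
  · intro z; simp [hΦf.1, hΦg.1]
  · intro z t
    have hA : HasDerivAt (fun s => Φf (g z.2 * s) z.1)
        (g z.2 • hamVF f (Φf (g z.2 * t) z.1)) t := by
      have hu : HasDerivAt (fun s : ℝ => g z.2 * s) (g z.2) t := by
        simpa using (hasDerivAt_id t).const_mul (g z.2)
      exact (hΦf.2 z.1 (g z.2 * t)).scomp t hu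
    have hB : HasDerivAt (fun s => Φg (f z.1 * s) z.2)
        (f z.1 • hamVF g (Φg (f z.1 * t) z.2)) t := by
      have hu : HasDerivAt (fun s : ℝ => f z.1 * s) (f z.1) t := by
        simpa using (hasDerivAt_id t).const_mul (f z.1)
      exact (hΦg.2 z.2 (f z.1 * t)).scomp t hu
    have := hA.prodMk hB
    rw [hamVFP_eq hf hg, conserved hg hΦg, conserved hf hΦf]
    exact this

lemma stepB (hf : ContDiff ℝ (⊤ : ℕ∞) f) (hg : ContDiff ℝ (⊤ : ℕ∞) g)
    {Φ : ℝ → PS m × PS m' → PS m × PS m'}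
    (hΦ : IsHamFlowP (fun z : PS m × PS m' => f z.1 * g z.2) Φ)
    (y : PS m) (x'' : PS m') (h0 : g x'' = 0) (h1 : fderiv ℝ g x'' = 0) (t : ℝ) :
    Φ t (y, x'') = (y, x'') := by
  have hδ : ∀ s : ℝ, HasDerivAt (fun _ : ℝ => ((y, x'') : PS m × PS m'))
      (hamVFP (fun z : PS m × PS m' => f z.1 * g z.2) (y, x'')) s := by
    intro s
    rw [hamVFP_eq hf hg, hamVF_zero h1]
    simp only [h0, zero_smul, smul_zero]
    exact hasDerivAt_const s _
  have := flow_unique (lipVFP hf hg) (hΦ.2 (y, x'')) hδ (by rw [hΦ.1]) t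
  exact this

lemma stepA (hf : ContDiff ℝ (⊤ : ℕ∞) f) (hg : ContDiff ℝ (⊤ : ℕ∞) g)
    {Φ : ℝ → PS m × PS m' → PS m × PS m'}
    (hΦ : IsHamFlowP (fun z : PS m × PS m' => f z.1 * g z.2) Φ)
    {Φ' : ℝ → PS m → PS m} (hΦ' : IsHamFlow f Φ')
    (y : PS m) (x'' : PS m') (h0 : g x'' = 1) (h1 : fderiv ℝ g x'' = 0) (t : ℝ) :
    Φ t (y, x'') = (Φ' t y, x'') := by
  have hδ : ∀ s : ℝ, HasDerivAt (fun u : ℝ => ((Φ' u y, x'') : PS m × PS m'))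
      (hamVFP (fun z : PS m × PS m' => f z.1 * g z.2) (Φ' s y, x'')) s := by
    intro s
    rw [hamVFP_eq hf hg, hamVF_zero h1]
    simp only [h0, one_smul, smul_zero]
    exact (hΦ'.2 y s).prodMk (hasDerivAt_const s _)
  exact flow_unique (lipVFP hf hg) (hΦ.2 (y, x'')) hδ (by rw [hΦ.1, hΦ'.1]) t
end

/-- **Coupling lemma** (Lemma 4.1 of Lazzarini–Marco–Sauzin, after Marco–Sauzin). -/
theorem coupling_lemma
    (m m' : ℕ) (hm : 1 ≤ m) (hm' : 1 ≤ m')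
    (F Finv : PS m → PS m) (G Ginv : PS m' → PS m')
    (hF : ContDiff ℝ (⊤ : ℕ∞) F) (hFi : ContDiff ℝ (⊤ : ℕ∞) Finv) (hFe : EquivariantMap F)
    (hFl : Function.LeftInverse Finv F) (hFr : Function.RightInverse Finv F)
    (hG : ContDiff ℝ (⊤ : ℕ∞) G) (hGi : ContDiff ℝ (⊤ : ℕ∞) Ginv) (hGe : EquivariantMap G)
    (hGl : Function.LeftInverse Ginv G) (hGr : Function.RightInverse Ginv G)
    (f : PS m → ℝ) (g : PS m' → ℝ)
    (hf : ContDiff ℝ (⊤ : ℕ∞) f) (hg : ContDiff ℝ (⊤ : ℕ∞) g)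
    (hfp : ZnPeriodic f) (hgp : ZnPeriodic g)
    (hfc : ∃ Φ, IsHamFlow f Φ) (hgc : ∃ Φ, IsHamFlow g Φ)
    (q : ℕ) (hq : 1 ≤ q) (V : Set (PS m'))
    (hVper : G^[q] '' V = V)
    (hsync0 : ∀ x' ∈ V, g x' = 1 ∧ fderiv ℝ g x' = 0)
    (hsync : ∀ x' ∈ V, ∀ s : ℕ, 1 ≤ s → s ≤ q - 1 →
      g (G^[s] x') = 0 ∧ fderiv ℝ g (G^[s] x') = 0) :
    -- `f ⊗ g` generates a complete Hamiltonian vector field …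
    (∃ Φ, IsHamFlowP (fun z : PS m × PS m' => f z.1 * g z.2) Φ) ∧
    -- … and `ℱ = Φ^{f⊗g} ∘ (F × G)` satisfies the iteration formula
    ∀ φfg : PS m × PS m' → PS m × PS m',
      IsTimeOneP (fun z : PS m × PS m' => f z.1 * g z.2) φfg →
      ∀ φf : PS m → PS m, IsTimeOne f φf →
      ∀ Fcinv : PS m × PS m' → PS m × PS m',
        Function.LeftInverse Fcinv (φfg ∘ fun z : PS m × PS m' => (F z.1, G z.2)) →
        Function.RightInverse Fcinv (φfg ∘ fun z : PS m × PS m' => (F z.1, G z.2)) →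
      ∀ Pinv : PS m → PS m,
        Function.LeftInverse Pinv (φf ∘ F^[q]) →
        Function.RightInverse Pinv (φf ∘ F^[q]) →
      ∀ (ℓ : ℤ) (s : ℕ), s ≤ q - 1 →
      ∀ (x : PS m), ∀ x' ∈ V,
        zIter (φfg ∘ fun z : PS m × PS m' => (F z.1, G z.2)) Fcinv (ℓ * q + s) (x, x') =
          (F^[s] (zIter (φf ∘ F^[q]) Pinv ℓ x), zIter G Ginv (ℓ * q + s) x') := by
  obtain ⟨Φf0, hΦf0⟩ := hfc
  obtain ⟨Φg0, hΦg0⟩ := hgc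
  constructor
  · exact ⟨_, flow_exists hf hg hΦf0 hΦg0⟩
  intro φfg hφfg φf hφf Fcinv hFcl hFcr Pinv hPl hPr ℓ s hs x x' hx'
  obtain ⟨Φ, hΦ, rfl⟩ := hφfg
  obtain ⟨Φ', hΦ', rfl⟩ := hφf
  set T : PS m × PS m' → PS m × PS m' :=
    (Φ 1 ∘ fun z : PS m × PS m' => (F z.1, G z.2)) with hT
  set P : PS m → PS m := (Φ' 1 ∘ F^[q]) with hP
  -- V invariance
  have hVq : ∀ y ∈ V, G^[q] y ∈ V := fun y hy => hVper ▸ Set.mem_image_of_mem _ hy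
  have hVqi : ∀ y ∈ V, Ginv^[q] y ∈ V := by
    intro y hy
    rw [← hVper] at hy
    obtain ⟨w, hw, rfl⟩ := hy
    rw [(hGl.iterate q) w]
    exact hw
  have hVqim : ∀ (k : ℕ), ∀ y ∈ V, Ginv^[k * q] y ∈ V := by
    intro k
    induction k with
    | zero => simpa using fun y hy => hy
    | succ k ih =>
      intro y hy
      have : (k + 1) * q = k * q + q := by ring
      rw [this, Function.iterate_add_apply]
      exact ih _ (hVqi y hy)
  -- forward small iterates
  have fwd_small : ∀ s : ℕ, s ≤ q - 1 → ∀ (x : PS m), ∀ y ∈ V,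
      T^[s] (x, y) = (F^[s] x, G^[s] y) := by
    intro s
    induction s with
    | zero => intro _ x y _; simp
    | succ s ih =>
      intro hs1 x y hy
      have hsq : s ≤ q - 1 := by omega
      rw [Function.iterate_succ_apply', ih hsq x y hy]
      have : T (F^[s] x, G^[s] y) = Φ 1 (F^[s+1] x, G^[s+1] y) := by
        simp [hT, Function.iterate_succ_apply']
      rw [this]
      obtain ⟨h0, h1⟩ := hsync y hy (s + 1) (by omega) hs1
      exact stepB hf hg hΦ _ _ h0 h1 1
  -- the full block
  have fwd_block : ∀ (x : PS m), ∀ y ∈ V, T^[q] (x, y) = (P x, G^[q] y) := by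
    intro x y hy
    have hq1 : q = (q - 1) + 1 := by omega
    rw [hq1, Function.iterate_succ_apply', fwd_small (q-1) le_rfl x y hy]
    have : T (F^[q-1] x, G^[q-1] y) = Φ 1 (F^[(q-1)+1] x, G^[(q-1)+1] y) := by
      simp [hT, Function.iterate_succ_apply']
    rw [this, ← hq1]
    obtain ⟨h0, h1⟩ := hsync0 (G^[q] y) (hVq y hy)
    rw [stepA hf hg hΦ hΦ' _ _ h0 h1 1]
    rfl
  -- forward full
  have fwd_full : ∀ (l s : ℕ), s ≤ q - 1 → ∀ (x : PS m), ∀ y ∈ V,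
      T^[l * q + s] (x, y) = (F^[s] (P^[l] x), G^[l * q + s] y) := by
    intro l
    induction l with
    | zero => intro s hs x y hy; simpa using fwd_small s hs x y hy
    | succ l ih =>
      intro s hs x y hy
      have h1 : (l + 1) * q + s = (l * q + s) + q := by ring
      rw [h1, Function.iterate_add_apply, fwd_block x y hy,
        ih s hs _ _ (hVq y hy), ← Function.iterate_succ_apply,
        ← Function.iterate_add_apply]
  -- split on sign of ℓ
  rcases le_or_gt 0 ℓ with hl | hl
  · -- nonnegative case
    set l : ℕ := ℓ.toNat with hldef
    have hll : (ℓ : ℤ) = (l : ℤ) := (Int.toNat_of_nonneg hl).symm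
    have hk : ℓ * q + s = ((l * q + s : ℕ) : ℤ) := by rw [hll]; push_cast; ring
    have hk0 : (0 : ℤ) ≤ ℓ * q + s := by rw [hk]; positivity
    have hz1 : zIter T Fcinv (ℓ * q + s) = T^[l * q + s] := by
      rw [zIter, if_pos hk0, hk, Int.toNat_natCast]
    have hz2 : zIter P Pinv ℓ = P^[l] := by
      rw [zIter, if_pos hl]
    have hz3 : zIter G Ginv (ℓ * q + s) = G^[l * q + s] := by
      rw [zIter, if_pos hk0, hk, Int.toNat_natCast]
    rw [hz1, hz2, hz3]
    exact fwd_full l s hs x x' hx'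
  · -- negative case
    set k : ℕ := (-ℓ).toNat with hkdef
    have hk1 : 1 ≤ k := by omega
    have hll : (ℓ : ℤ) = -(k : ℤ) := by omega
    have hqk : q ≤ k * q := Nat.le_mul_of_pos_left q (by omega)
    have hsk : s ≤ k * q := by omega
    set n : ℕ := k * q - s with hndef
    have hns : n + s = k * q := by omega
    have hkneg : ℓ * q + s = -((n : ℕ) : ℤ) := by
      rw [hll]
      have : (s : ℤ) ≤ (k : ℤ) * q := by exact_mod_cast hsk
      push_cast [hndef, Nat.cast_sub hsk]
      ring
    have hn0 : 0 < n := by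
      have : s + 1 ≤ q := by omega
      omega
    have hz1 : zIter T Fcinv (ℓ * q + s) = Fcinv^[n] := by
      rw [zIter, if_neg (by omega), hkneg]; simp
    have hz2 : zIter P Pinv ℓ = Pinv^[k] := by
      rw [zIter, if_neg (by omega), hll]; simp
    have hz3 : zIter G Ginv (ℓ * q + s) = Ginv^[n] := by
      rw [zIter, if_neg (by omega), hkneg]; simp
    rw [hz1, hz2, hz3]
    -- key computation
    set y : PS m := Pinv^[k] x with hy
    set w : PS m' := Ginv^[k * q] x' with hw
    have hwV : w ∈ V := hVqim k x' hx'
    have hGn : Ginv^[n] x' = G^[s] w := by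
      have h1 : Ginv^[k * q] x' = Ginv^[s] (Ginv^[n] x') := by
        rw [← Function.iterate_add_apply, Nat.add_comm, hns]
      rw [hw, h1, (hGr.iterate s) _]
    have hTn : T^[n] (F^[s] y, Ginv^[n] x') = (x, x') := by
      have h2 : (F^[s] y, Ginv^[n] x') = T^[s] (y, w) := by
        rw [fwd_small s hs y w hwV, hGn]
      have h3 := fwd_full k 0 (by omega) y w hwV
      simp only [Nat.add_zero, Function.iterate_zero_apply] at h3
      rw [h2, ← Function.iterate_add_apply, hns, h3, hy, hw,
        (hPr.iterate k) x, (hGr.iterate (k * q)) x']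
    calc Fcinv^[n] (x, x') = Fcinv^[n] (T^[n] (F^[s] y, Ginv^[n] x')) := by rw [hTn]
      _ = (F^[s] y, Ginv^[n] x') := (hFcl.iterate n) _
end
end

section
/- Coupling of periodic domains. Let ℱ = Φ^{f⊗g} ∘ (F×G) : 𝔸^{m+m'} → 𝔸^{m+m'} with m, m' ≥ 1 integers, F, G diffeomorphisms of 𝔸^m and 𝔸^{m'}, f, g C^∞ Hamiltonians generating complete Hamiltonian vector fields, q ≥ 1 an integer, and 𝒱 ⊂ 𝔸^{m'} with G^q(𝒱) = 𝒱 and the synchronization conditions (for all x' ∈ 𝒱: g(x') = 1, dg(x') = 0, and g(G^s(x')) = 0, dg(G^s(x')) = 0 for 1 ≤ s ≤ q−1). Assume the diffeomorphism Φ^f ∘ F^q admits a subset 𝒰 ⊂ 𝔸^m with (Φ^f ∘ F^q)^p(𝒰) = 𝒰 for some integer p ≥ 1, and that there are sets ℬ ⊂ ℬ* ⊂ 𝔸^m and ℬ' ⊂ ℬ'* ⊂ 𝔸^{m'} with 𝒰 ⊂ ℬ, (Φ^f ∘ F^q)^k(𝒰) ∩ ℬ* = ∅ for 1 ≤ k ≤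 p−1, 𝒱 ⊂ ℬ', and G^k(𝒱) ∩ ℬ'* = ∅ for 1 ≤ k ≤ q−1. Then the product set 𝒰 × 𝒱 ⊂ 𝔸^{m+m'} satisfies ℱ^{pq}(𝒰×𝒱) = 𝒰×𝒱, 𝒰×𝒱 ⊂ ℬ×ℬ', and ℱ^k(𝒰×𝒱) ∩ (ℬ*×ℬ'*) = ∅ for 1 ≤ k ≤ pq−1. -/
open scoped BigOperators ENNReal

noncomputable section


open Set in
lemma ode_uniq {E : Type*} [NormedAddCommGroup E] [NormedSpace ℝ E]
    {v : E → E} (hv : LocallyLipschitz v)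
    {α β : ℝ → E}
    (hα : ∀ t, HasDerivAt α (v (α t)) t)
    (hβ : ∀ t, HasDerivAt β (v (β t)) t)
    (h0 : α 0 = β 0) (t : ℝ) : α t = β t := by
  have hαc : Continuous α := continuous_iff_continuousAt.mpr fun t => (hα t).continuousAt
  have hβc : Continuous β := continuous_iff_continuousAt.mpr fun t => (hβ t).continuousAt
  have hS : IsClopen {t : ℝ | α t = β t} := by
    constructor
    · exact isClosed_eq hαc hβc
    · rw [isOpen_iff_mem_nhds]
      intro t0 ht0
      obtain ⟨K, s, hs, hK⟩ := hv (α t0)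
      have hs' : s ∈ nhds (β t0) := by rw [show β t0 = α t0 from ht0.symm]; exact hs
      have h1 : ∀ᶠ t in nhds t0, α t ∈ s := hαc.continuousAt.preimage_mem_nhds hs
      have h2 : ∀ᶠ t in nhds t0, β t ∈ s := hβc.continuousAt.preimage_mem_nhds hs'
      exact ODE_solution_unique_of_eventually (v := fun _ : ℝ => v) (s := fun _ => s)
        (Filter.Eventually.of_forall fun _ => hK) (h1.mono fun t ht => ⟨hα t, ht⟩) (h2.mono fun t ht => ⟨hβ t, ht⟩) ht0
  have := hS.eq_univ ⟨0, h0⟩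
  have ht : t ∈ {t : ℝ | α t = β t} := this ▸ mem_univ t
  exact ht

lemma fderiv_fg_apply {m m' : ℕ} {f : PS m → ℝ} {g : PS m' → ℝ}
    (hf : ContDiff ℝ (⊤ : ℕ∞) f) (hg : ContDiff ℝ (⊤ : ℕ∞) g) (z : PS m × PS m') (v : PS m × PS m') :
    fderiv ℝ (fun z : PS m × PS m' => f z.1 * g z.2) z v =
      f z.1 * fderiv ℝ g z.2 v.2 + g z.2 * fderiv ℝ f z.1 v.1 := by
  have h1 : HasFDerivAt (fun z : PS m × PS m' => f z.1)
      ((fderiv ℝ f z.1).comp (ContinuousLinearMap.fst ℝ (PS m) (PS m'))) z :=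
    ((hf.differentiable (by simp) z.1).hasFDerivAt).comp z hasFDerivAt_fst
  have h2 : HasFDerivAt (fun z : PS m × PS m' => g z.2)
      ((fderiv ℝ g z.2).comp (ContinuousLinearMap.snd ℝ (PS m) (PS m'))) z :=
    ((hg.differentiable (by simp) z.2).hasFDerivAt).comp z hasFDerivAt_snd
  rw [show (fun z : PS m × PS m' => f z.1 * g z.2) = (fun z : PS m × PS m' => f z.1) * (fun z => g z.2) from rfl, (h1.mul h2).fderiv]
  simp [smul_eq_mul]

lemma hamVFP_zero {m m' : ℕ} {f : PS m → ℝ} {g : PS m' → ℝ}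
    (hf : ContDiff ℝ (⊤ : ℕ∞) f) (hg : ContDiff ℝ (⊤ : ℕ∞) g) {z : PS m × PS m'}
    (h0 : g z.2 = 0) (h1 : fderiv ℝ g z.2 = 0) :
    hamVFP (fun z : PS m × PS m' => f z.1 * g z.2) z = 0 := by
  have e : ∀ v : PS m × PS m',
      fderiv ℝ (fun z : PS m × PS m' => f z.1 * g z.2) z v = 0 := by
    intro v; rw [fderiv_fg_apply hf hg, h0, h1]; simp
  refine Prod.ext (Prod.ext ?_ ?_) (Prod.ext ?_ ?_) <;> funext i <;> simp [hamVFP, e]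

lemma hamVFP_one {m m' : ℕ} {f : PS m → ℝ} {g : PS m' → ℝ}
    (hf : ContDiff ℝ (⊤ : ℕ∞) f) (hg : ContDiff ℝ (⊤ : ℕ∞) g) {z : PS m × PS m'}
    (h0 : g z.2 = 1) (h1 : fderiv ℝ g z.2 = 0) :
    hamVFP (fun z : PS m × PS m' => f z.1 * g z.2) z = (hamVF f z.1, 0) := by
  refine Prod.ext (Prod.ext ?_ ?_) (Prod.ext ?_ ?_) <;> funext i <;>
    simp [hamVFP, hamVF, fderiv_fg_apply hf hg, h0, h1]

lemma hamVFP_locallyLipschitz {m m' : ℕ} {H : PS m × PS m' → ℝ} (hH : ContDiff ℝ (⊤ : ℕ∞) H) :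
    LocallyLipschitz (hamVFP H) := by
  have hD : ContDiff ℝ (⊤ : ℕ∞) (fderiv ℝ H) := hH.fderiv_right (by simp)
  have key : ∀ w : PS m × PS m', ContDiff ℝ (⊤ : ℕ∞) (fun z => fderiv ℝ H z w) :=
    fun w => hD.clm_apply contDiff_const
  have h : ContDiff ℝ (⊤ : ℕ∞) (hamVFP H) := by
    unfold hamVFP
    exact (ContDiff.prodMk (ContDiff.prodMk (contDiff_pi.mpr fun i => key _)
      (contDiff_pi.mpr fun i => (key _).neg))
      (ContDiff.prodMk (contDiff_pi.mpr fun i => key _)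
      (contDiff_pi.mpr fun i => (key _).neg)))
  exact (h.of_le (by simp)).locallyLipschitz

lemma flow_eq_of_curve {m m' : ℕ} {H : PS m × PS m' → ℝ} (hH : ContDiff ℝ (⊤ : ℕ∞) H)
    {Φ : ℝ → PS m × PS m' → PS m × PS m'} (hΦ : IsHamFlowP H Φ)
    {c : ℝ → PS m × PS m'} {z0 : PS m × PS m'} (hc0 : c 0 = z0)
    (hc : ∀ t, HasDerivAt c (hamVFP H (c t)) t) (t : ℝ) :
    Φ t z0 = c t :=
  ode_uniq (hamVFP_locallyLipschitz hH) (hΦ.2 z0) hc (by rw [hΦ.1 z0, hc0]) t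

/-- **Coupling of periodic domains** (Corollary 4.2 of Lazzarini–Marco–Sauzin). -/
theorem coupling_periodic_domains
    (m m' : ℕ) (hm : 1 ≤ m) (hm' : 1 ≤ m')
    (F Finv : PS m → PS m) (G Ginv : PS m' → PS m')
    (hF : ContDiff ℝ (⊤ : ℕ∞) F) (hFi : ContDiff ℝ (⊤ : ℕ∞) Finv) (hFe : EquivariantMap F)
    (hFl : Function.LeftInverse Finv F) (hFr : Function.RightInverse Finv F)
    (hG : ContDiff ℝ (⊤ : ℕ∞) G) (hGi : ContDiff ℝ (⊤ : ℕ∞) Ginv) (hGe : EquivariantMap G)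
    (hGl : Function.LeftInverse Ginv G) (hGr : Function.RightInverse Ginv G)
    (f : PS m → ℝ) (g : PS m' → ℝ)
    (hf : ContDiff ℝ (⊤ : ℕ∞) f) (hg : ContDiff ℝ (⊤ : ℕ∞) g)
    (hfp : ZnPeriodic f) (hgp : ZnPeriodic g)
    (hfc : ∃ Φ, IsHamFlow f Φ) (hgc : ∃ Φ, IsHamFlow g Φ)
    (q : ℕ) (hq : 1 ≤ q) (V : Set (PS m'))
    (hVper : G^[q] '' V = V)
    (hsync0 : ∀ x' ∈ V, g x' = 1 ∧ fderiv ℝ g x' = 0)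
    (hsync : ∀ x' ∈ V, ∀ s : ℕ, 1 ≤ s → s ≤ q - 1 →
      g (G^[s] x') = 0 ∧ fderiv ℝ g (G^[s] x') = 0)
    -- `φf` is the time-one map of `f`, and `𝒰` is a `p`-periodic subset of `Φ^f ∘ F^q`
    (φf : PS m → PS m) (hφf : IsTimeOne f φf)
    (p : ℕ) (hp : 1 ≤ p) (U : Set (PS m))
    (hUper : (φf ∘ F^[q])^[p] '' U = U)
    (B Bst : Set (PS m)) (B' Bst' : Set (PS m'))
    (hBB : B ⊆ Bst) (hBB' : B' ⊆ Bst')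
    (hUB : U ⊆ B)
    (hUesc : ∀ k : ℕ, 1 ≤ k → k ≤ p - 1 → Disjoint ((φf ∘ F^[q])^[k] '' U) Bst)
    (hVB : V ⊆ B')
    (hVesc : ∀ k : ℕ, 1 ≤ k → k ≤ q - 1 → Disjoint (G^[k] '' V) Bst') :
    ∀ φfg : PS m × PS m' → PS m × PS m',
      IsTimeOneP (fun z : PS m × PS m' => f z.1 * g z.2) φfg →
      ((φfg ∘ fun z : PS m × PS m' => (F z.1, G z.2))^[p * q] '' (U ×ˢ V) = U ×ˢ V) ∧
      U ×ˢ V ⊆ B ×ˢ B' ∧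
      ∀ k : ℕ, 1 ≤ k → k ≤ p * q - 1 →
        Disjoint ((φfg ∘ fun z : PS m × PS m' => (F z.1, G z.2))^[k] '' (U ×ˢ V))
          (Bst ×ˢ Bst') := by
  intro φfg hφfg
  obtain ⟨Φfg, hΦfg, hEq⟩ := hφfg
  obtain ⟨Φf, hΦf, hφfEq⟩ := hφf
  have hH : ContDiff ℝ (⊤ : ℕ∞) (fun z : PS m × PS m' => f z.1 * g z.2) :=
    (hf.comp contDiff_fst).mul (hg.comp contDiff_snd)
  -- key dynamical facts
  have fixlem : ∀ (y : PS m) (x'' : PS m'), g x'' = 0 → fderiv ℝ g x'' = 0 →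
      φfg (y, x'') = (y, x'') := by
    intro y x'' h0 h1
    rw [hEq]
    exact flow_eq_of_curve hH hΦfg (c := fun _ => (y, x'')) rfl
      (fun t => by
        rw [hamVFP_zero hf hg h0 h1]
        exact hasDerivAt_const t (y, x'')) 1
  have movelem : ∀ (y : PS m) (x'' : PS m'), g x'' = 1 → fderiv ℝ g x'' = 0 →
      φfg (y, x'') = (φf y, x'') := by
    intro y x'' h0 h1
    rw [hEq, hφfEq]
    exact flow_eq_of_curve hH hΦfg (c := fun t => (Φf t y, x''))
      (by show (Φf 0 y, x'') = (y, x''); rw [hΦf.1]) (fun t => by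
        rw [hamVFP_one hf hg h0 h1]
        exact (hΦf.2 y t).prodMk (hasDerivAt_const t x'')) 1
  -- normalize q and p
  obtain ⟨q', rfl⟩ : ∃ q', q = q' + 1 := ⟨q - 1, by omega⟩
  obtain ⟨p', rfl⟩ : ∃ p', p = p' + 1 := ⟨p - 1, by omega⟩
  set T := φfg ∘ fun z : PS m × PS m' => (F z.1, G z.2) with hT
  have hTapp : ∀ z : PS m × PS m', T z = φfg (F z.1, G z.2) := fun z => rfl
  have hVq : ∀ x' ∈ V, G^[q' + 1] x' ∈ V := by
    intro x' hx'; rw [← hVper]; exact Set.mem_image_of_mem _ hx'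
  have L1 : ∀ x' ∈ V, ∀ (x : PS m) (s : ℕ), s ≤ q' →
      T^[s] (x, x') = (F^[s] x, G^[s] x') := by
    intro x' hx' x s hs
    induction s with
    | zero => simp
    | succ n ih =>
      rw [Function.iterate_succ_apply', ih (by omega), hTapp]
      rw [show (F (F^[n] x), G (G^[n] x')) = (F^[n + 1] x, G^[n + 1] x') by
        rw [Function.iterate_succ_apply', Function.iterate_succ_apply']]
      have hsy := hsync x' hx' (n + 1) (by omega) (by omega)
      exact fixlem _ _ hsy.1 hsy.2
  have L2 : ∀ x' ∈ V, ∀ x : PS m,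
      T^[q' + 1] (x, x') = ((φf ∘ F^[q' + 1]) x, G^[q' + 1] x') := by
    intro x' hx' x
    rw [Function.iterate_succ_apply', L1 x' hx' x q' le_rfl, hTapp]
    rw [show (F (F^[q'] x), G (G^[q'] x')) = (F^[q' + 1] x, G^[q' + 1] x') by
      rw [Function.iterate_succ_apply', Function.iterate_succ_apply']]
    have h := hsync0 _ (hVq x' hx')
    exact movelem _ _ h.1 h.2
  have L3 : ∀ x' ∈ V, ∀ (x : PS m) (a : ℕ),
      T^[a * (q' + 1)] (x, x') = ((φf ∘ F^[q' + 1])^[a] x, (G^[q' + 1])^[a] x') ∧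
      (G^[q' + 1])^[a] x' ∈ V := by
    intro x' hx' x a
    induction a with
    | zero => exact ⟨by simp, hx'⟩
    | succ n ih =>
      constructor
      · rw [show (n + 1) * (q' + 1) = (q' + 1) + n * (q' + 1) by ring,
          Function.iterate_add_apply, ih.1, L2 _ ih.2,
          Function.iterate_succ_apply' (φf ∘ F^[q' + 1]),
          Function.iterate_succ_apply' (G^[q' + 1])]
      · rw [Function.iterate_succ_apply']
        exact hVq _ ih.2
  have hVperN : ∀ a : ℕ, (G^[q' + 1])^[a] '' V = V := by
    intro a
    induction a with
    | zero => simp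
    | succ n ih => rw [Function.iterate_succ', Set.image_comp, ih, hVper]
  refine ⟨?_, Set.prod_mono hUB hVB, ?_⟩
  · have key : Set.EqOn (T^[(p' + 1) * (q' + 1)])
        (fun z : PS m × PS m' =>
          ((φf ∘ F^[q' + 1])^[p' + 1] z.1, (G^[q' + 1])^[p' + 1] z.2)) (U ×ˢ V) := by
      rintro ⟨x, x'⟩ ⟨hxU, hx'V⟩
      rw [show (p' + 1) * (q' + 1) = (p' + 1) * (q' + 1) from rfl]
      exact (L3 x' hx'V x (p' + 1)).1
    rw [Set.image_congr key, ← Set.prod_image_image_eq, hUper, hVperN (p' + 1)]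
  · intro k hk1 hk2
    rw [Set.disjoint_left]
    rintro z ⟨⟨x, x'⟩, ⟨hxU, hx'V⟩, rfl⟩ hzB
    have hks : k % (q' + 1) + k / (q' + 1) * (q' + 1) = k := Nat.mod_add_div' k (q' + 1)
    set s := k % (q' + 1) with hsdef
    set a := k / (q' + 1) with hadef
    have hslt : s < q' + 1 := Nat.mod_lt _ (Nat.succ_pos _)
    have hsplit : T^[k] (x, x') = T^[s] (T^[a * (q' + 1)] (x, x')) := by
      rw [← hks, Function.iterate_add_apply]
    obtain ⟨hL3a, hL3b⟩ := L3 x' hx'V x a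
    by_cases hs0 : s = 0
    · -- k = a * (q'+1), use hUesc
      have hka : k = a * (q' + 1) := by omega
      have ha1 : 1 ≤ a := by
        rcases Nat.eq_zero_or_pos a with h | h
        · rw [h, Nat.zero_mul] at hka; omega
        · exact h
      have hap : a < p' + 1 := by
        have h1 : a * (q' + 1) < (p' + 1) * (q' + 1) := by
          have : (p' + 1) * (q' + 1) ≥ 1 := Nat.one_le_iff_ne_zero.mpr (by positivity)
          omega
        exact Nat.lt_of_mul_lt_mul_right h1
      have heq : T^[k] (x, x') = ((φf ∘ F^[q' + 1])^[a] x, (G^[q' + 1])^[a] x') := by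
        rw [hka]; exact hL3a
      rw [heq] at hzB
      exact Set.disjoint_left.mp (hUesc a ha1 (by omega))
        (Set.mem_image_of_mem _ hxU) hzB.1
    · -- use hVesc
      have heq : T^[k] (x, x') =
          (F^[s] ((φf ∘ F^[q' + 1])^[a] x), G^[s] ((G^[q' + 1])^[a] x')) := by
        rw [hsplit, hL3a, L1 _ hL3b _ s (by omega)]
      rw [heq] at hzB
      exact Set.disjoint_left.mp (hVesc s (by omega) (by omega))
        (Set.mem_image_of_mem _ hL3b) hzB.2
end
end

section
/- Rescaled standard maps with wandering discs of explicit area. Let 0 < ρ < 1/2 and let U ∈ C^∞(𝕋) satisfy U'(x mod ℤ) = −1 + x for all x ∈ [−ρ, ρ]. Then there exists a real C₀ > 0 such that for every integer q ≥ 1 the diffeomorphism 𝒮_q of 𝔸 given by 𝒮_q(θ,r) = (θ + q r, r − (1/q)·U'(θ + q r)) (which equals Φ^{U/q} ∘ (Φ^{r²/2})^q) admits a wandering disc W_q ⊂ 𝔸_3 with area(W_q) = C₀/q. -/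
open scoped BigOperators ENNReal
open MeasureTheory

noncomputable section


/-- A disc in `𝔸`: a bounded open connected simply connected subset, given by a lift in `ℝ²`
which is injected into `𝔸` by the canonical projection. -/
def IsDisc (D : Set (ℝ × ℝ)) : Prop :=
  IsOpen D ∧ IsConnected D ∧ SimplyConnectedSpace D ∧ Bornology.IsBounded D ∧
    ∀ m : ℤ, m ≠ 0 → Disjoint D ((fun x : ℝ × ℝ => (x.1 + (m : ℝ), x.2)) '' D)

/-- Lift of the vertical strip `ℬ_d = {(θ mod ℤ, r) : |θ| ≤ d}  ⊂ 𝔸`. -/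
def BStrip (d : ℝ) : Set (ℝ × ℝ) := {x | ∃ m : ℤ, |x.1 - m| ≤ d}

/-- Lift of `𝔸⁺_d = 𝕋 × [0,d]`. -/
def APlus (d : ℝ) : Set (ℝ × ℝ) := {x | 0 ≤ x.2 ∧ x.2 ≤ d}

/-- Lift of `𝔸_R = 𝕋 × [-R,R]`. -/
def annR (R : ℝ) : Set (ℝ × ℝ) := {x | |x.2| ≤ R}

/-- Saturation of a subset of `ℝ²` under the `ℤ`-translations in the angle. -/
def satur1 (D : Set (ℝ × ℝ)) : Set (ℝ × ℝ) := {x | ∃ m : ℤ, (x.1 + (m : ℝ), x.2) ∈ D}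

/-- The rescaled standard map
`𝒮_q(θ,r) = (θ + q r, r - (1/q) U'(θ + q r)) = Φ^{U/q} ∘ (Φ^{r²/2})^q`. -/
noncomputable def Smap (q : ℕ) (U : ℝ → ℝ) : ℝ × ℝ → ℝ × ℝ :=
  fun x => (x.1 + (q : ℝ) * x.2, x.2 - (1 / (q : ℝ)) * deriv U (x.1 + (q : ℝ) * x.2))

/-- Explicit inverse of the rescaled standard map. -/
noncomputable def SmapInv (q : ℕ) (U : ℝ → ℝ) : ℝ × ℝ → ℝ × ℝ :=
  fun x => (x.1 - (q : ℝ) * x.2 - deriv U x.1, x.2 + (1 / (q : ℝ)) * deriv U x.1)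

lemma derivU_per (U : ℝ → ℝ) (hUper : ∀ x : ℝ, U (x + 1) = U x) :
    ∀ (n : ℤ) (x : ℝ), deriv U (x + n) = deriv U x := by
  have h1 : ∀ x : ℝ, deriv U (x + 1) = deriv U x := by
    intro x
    conv_rhs => rw [show U = fun y => U (y + 1) from by funext y; rw [hUper]]
    rw [deriv_comp_add_const]
  have h1' : ∀ x : ℝ, deriv U (x - 1) = deriv U x := by
    intro x
    have := h1 (x - 1)
    rw [sub_add_cancel] at this
    exact this.symm
  intro n
  induction n using Int.induction_on with
  | zero => simp
  | succ n ih =>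
      intro x
      have ih1 := ih (x + 1)
      push_cast at ih1 ⊢
      rw [show x + ((n : ℝ) + 1) = (x + 1) + (n : ℝ) by ring, ih1, h1]
  | pred n ih =>
      intro x
      have ihx := ih x
      push_cast at ihx ⊢
      rw [show x + (-(n : ℝ) - 1) = (x + -(n : ℝ)) - 1 by ring, h1', ihx]

/-- Points following the escaping orbit at level `y` with small deviations. -/
def GoodPt (q : ℕ) (ρ : ℝ) (y : ℤ) (p : ℝ × ℝ) : Prop :=
  ∃ (m : ℤ) (ε η : ℝ), p = ((m : ℝ) + ε, ((y : ℝ) + η) / q) ∧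
    |ε| < ρ / 2 ∧ |η| < ρ / 2 ∧ |ε + η| < ρ / 2

section Steps

variable {q : ℕ} {ρ : ℝ} {U : ℝ → ℝ}

lemma stepF (hq : 1 ≤ q) (hρ1 : 0 < ρ)
    (hUper : ∀ x : ℝ, U (x + 1) = U x)
    (hU' : ∀ x : ℝ, -ρ ≤ x → x ≤ ρ → deriv U x = -1 + x)
    (y : ℤ) (p : ℝ × ℝ) (h : GoodPt q ρ y p) : GoodPt q ρ (y + 1) (Smap q U p) := by
  obtain ⟨m, ε, η, hp, he, hh, hs⟩ := h
  have hq0 : (0 : ℝ) < q := by exact_mod_cast hq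
  have hqne : (q : ℝ) ≠ 0 := ne_of_gt hq0
  subst hp
  refine ⟨m + y, ε + η, -ε, ?_, hs, by rwa [abs_neg],
    by rw [show ε + η + -ε = η by ring]; exact hh⟩
  have hx : (m : ℝ) + ε + (q : ℝ) * (((y : ℝ) + η) / q) = (ε + η) + ((m + y : ℤ) : ℝ) := by
    push_cast; field_simp; ring
  have hD : deriv U ((ε + η) + ((m + y : ℤ) : ℝ)) = -1 + (ε + η) := by
    rw [derivU_per U hUper (m + y) (ε + η)]
    have h2 := abs_lt.mp hs
    exact hU' _ (by linarith [h2.1]) (by linarith [h2.2])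
  simp only [Smap]
  rw [hx, hD, Prod.mk.injEq]
  constructor
  · push_cast; ring
  · push_cast; field_simp; ring

lemma stepB_s11 (hq : 1 ≤ q) (hρ1 : 0 < ρ)
    (hUper : ∀ x : ℝ, U (x + 1) = U x)
    (hU' : ∀ x : ℝ, -ρ ≤ x → x ≤ ρ → deriv U x = -1 + x)
    (y : ℤ) (p : ℝ × ℝ) (h : GoodPt q ρ y p) : GoodPt q ρ (y - 1) (SmapInv q U p) := by
  obtain ⟨m, ε, η, hp, he, hh, hs⟩ := h
  have hq0 : (0 : ℝ) < q := by exact_mod_cast hq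
  have hqne : (q : ℝ) ≠ 0 := ne_of_gt hq0
  subst hp
  refine ⟨m - y + 1, -η, ε + η, ?_, by rwa [abs_neg], hs,
    by rw [show -η + (ε + η) = ε by ring]; exact he⟩
  have hD : deriv U ((m : ℝ) + ε) = -1 + ε := by
    rw [show (m : ℝ) + ε = ε + (m : ℤ) by ring, derivU_per U hUper m ε]
    have h2 := abs_lt.mp he
    exact hU' _ (by linarith [h2.1]) (by linarith [h2.2])
  simp only [SmapInv]
  rw [hD, Prod.mk.injEq]
  constructor
  · push_cast; field_simp; ring
  · push_cast; field_simp; ring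

lemma iterF (hq : 1 ≤ q) (hρ1 : 0 < ρ)
    (hUper : ∀ x : ℝ, U (x + 1) = U x)
    (hU' : ∀ x : ℝ, -ρ ≤ x → x ≤ ρ → deriv U x = -1 + x)
    (y : ℤ) (n : ℕ) (p : ℝ × ℝ) (h : GoodPt q ρ y p) :
    GoodPt q ρ (y + n) ((Smap q U)^[n] p) := by
  induction n with
  | zero => simpa using h
  | succ n ih =>
      rw [show (y + ((n + 1 : ℕ) : ℤ)) = (y + (n : ℤ)) + 1 by push_cast; ring,
        Function.iterate_succ_apply']
      exact stepF hq hρ1 hUper hU' _ _ ih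

lemma iterB (hq : 1 ≤ q) (hρ1 : 0 < ρ)
    (hUper : ∀ x : ℝ, U (x + 1) = U x)
    (hU' : ∀ x : ℝ, -ρ ≤ x → x ≤ ρ → deriv U x = -1 + x)
    (y : ℤ) (n : ℕ) (p : ℝ × ℝ) (h : GoodPt q ρ y p) :
    GoodPt q ρ (y - n) ((SmapInv q U)^[n] p) := by
  induction n with
  | zero => simpa using h
  | succ n ih =>
      rw [show (y - ((n + 1 : ℕ) : ℤ)) = (y - (n : ℤ)) - 1 by push_cast; ring,
        Function.iterate_succ_apply']
      exact stepB_s11 hq hρ1 hUper hU' _ _ ih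

lemma zIterGood (hq : 1 ≤ q) (hρ1 : 0 < ρ)
    (hUper : ∀ x : ℝ, U (x + 1) = U x)
    (hU' : ∀ x : ℝ, -ρ ≤ x → x ≤ ρ → deriv U x = -1 + x)
    (y : ℤ) (k : ℤ) (p : ℝ × ℝ) (h : GoodPt q ρ y p) :
    GoodPt q ρ (y + k) (zIter (Smap q U) (SmapInv q U) k p) := by
  unfold zIter
  split
  · next hk =>
      have := iterF hq hρ1 hUper hU' y k.toNat p h
      rwa [Int.toNat_of_nonneg hk] at this
  · next hk =>
      have := iterB hq hρ1 hUper hU' y (-k).toNat p h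
      rw [Int.toNat_of_nonneg (by omega)] at this
      rwa [sub_neg_eq_add] at this

lemma smap_leftInv (hq : 1 ≤ q) (U : ℝ → ℝ) :
    Function.LeftInverse (SmapInv q U) (Smap q U) := by
  intro x
  have hqne : (q : ℝ) ≠ 0 := by
    have : (0 : ℝ) < q := by exact_mod_cast hq
    exact ne_of_gt this
  obtain ⟨a, b⟩ := x
  simp only [Smap, SmapInv]
  rw [Prod.mk.injEq]
  constructor
  · field_simp; ring
  · field_simp; ring

lemma smap_rightInv (hq : 1 ≤ q) (U : ℝ → ℝ) :
    Function.RightInverse (SmapInv q U) (Smap q U) := by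
  intro x
  have hqne : (q : ℝ) ≠ 0 := by
    have : (0 : ℝ) < q := by exact_mod_cast hq
    exact ne_of_gt this
  obtain ⟨a, b⟩ := x
  simp only [Smap, SmapInv]
  have h1 : a - (q : ℝ) * b - deriv U a + (q : ℝ) * (b + 1 / (q : ℝ) * deriv U a) = a := by
    field_simp; ring
  rw [h1, Prod.mk.injEq]
  constructor
  · rfl
  · field_simp; ring

end Steps

/-- **Rescaled standard maps with wandering discs of explicit area**
(Proposition on standard maps of Lazzarini–Marco–Sauzin). -/
theorem standard_map_wandering_disc
    (ρ : ℝ) (hρ1 : 0 < ρ) (hρ2 : ρ < 1/2)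
    (U : ℝ → ℝ) (hUsm : ContDiff ℝ (⊤ : ℕ∞) U) (hUper : ∀ x : ℝ, U (x + 1) = U x)
    (hU' : ∀ x : ℝ, -ρ ≤ x → x ≤ ρ → deriv U x = -1 + x) :
    ∃ C₀ : ℝ, 0 < C₀ ∧
      ∀ q : ℕ, 1 ≤ q →
        ∃ Wd : Set (ℝ × ℝ), IsDisc Wd ∧ Wd ⊆ annR 3 ∧
          volume Wd = ENNReal.ofReal (C₀ / (q : ℝ)) ∧
          ∃ Sinv : ℝ × ℝ → ℝ × ℝ,
            Function.LeftInverse Sinv (Smap q U) ∧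
            Function.RightInverse Sinv (Smap q U) ∧
            -- `Wd` is wandering for `𝒮_q` (as a disc in `𝔸`)
            ∀ k : ℤ, k ≠ 0 → Disjoint (zIter (Smap q U) Sinv k '' Wd) (satur1 Wd) := by
  refine ⟨ρ ^ 2 / 4, by positivity, ?_⟩
  intro q hq
  have hq0 : (0 : ℝ) < q := by exact_mod_cast hq
  have hq1 : (1 : ℝ) ≤ q := by exact_mod_cast hq
  have hqne : (q : ℝ) ≠ 0 := ne_of_gt hq0
  set W : Set (ℝ × ℝ) :=
    Set.Ioo (-(ρ / 4)) (ρ / 4) ×ˢ Set.Ioo ((2 - ρ / 4) / q) ((2 + ρ / 4) / q) with hW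
  have hlt : (2 - ρ / 4) / (q : ℝ) < (2 + ρ / 4) / q := by
    rw [div_lt_div_iff₀ hq0 hq0]; nlinarith
  have hmemc : ((0 : ℝ), 2 / (q : ℝ)) ∈ W := by
    constructor
    · constructor <;> simp <;> positivity
    · constructor
      · rw [div_lt_div_iff₀ hq0 hq0]; nlinarith
      · rw [div_lt_div_iff₀ hq0 hq0]; nlinarith
  have hconv : Convex ℝ W := (convex_Ioo _ _).prod (convex_Ioo _ _)
  -- every point of W is a good point at level 2
  have hWgood : ∀ p ∈ W, GoodPt q ρ 2 p := by
    rintro ⟨a, b⟩ ⟨ha, hb⟩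
    simp only [Set.mem_Ioo] at ha hb
    refine ⟨0, a, (q : ℝ) * b - 2, ?_, ?_, ?_, ?_⟩
    · rw [Prod.mk.injEq]
      constructor
      · simp
      · push_cast; field_simp; ring
    · rw [abs_lt]
      obtain ⟨h1, h2⟩ := ha
      constructor <;> nlinarith
    · rw [abs_lt]
      obtain ⟨h1, h2⟩ := hb
      rw [lt_div_iff₀ hq0] at h2
      rw [div_lt_iff₀ hq0] at h1
      constructor <;> nlinarith
    · rw [abs_lt]
      obtain ⟨ha1, ha2⟩ := ha
      obtain ⟨h1, h2⟩ := hb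
      rw [lt_div_iff₀ hq0] at h2
      rw [div_lt_iff₀ hq0] at h1
      constructor <;> nlinarith
  refine ⟨W, ?_, ?_, ?_, SmapInv q U, smap_leftInv hq U, smap_rightInv hq U, ?_⟩
  · -- IsDisc
    refine ⟨isOpen_Ioo.prod isOpen_Ioo, (hconv.isPathConnected ⟨_, hmemc⟩).isConnected,
      ?_, (Metric.isBounded_Ioo _ _).prod (Metric.isBounded_Ioo _ _), ?_⟩
    · have := hconv.contractibleSpace ⟨_, hmemc⟩
      infer_instance
    · intro m hm
      rw [Set.disjoint_left]
      rintro x hx ⟨w, hw, rfl⟩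
      obtain ⟨hx1, _⟩ := hx
      obtain ⟨hw1, _⟩ := hw
      simp only [Set.mem_Ioo] at hx1 hw1
      have habs : |(m : ℝ)| < 1 := by
        rw [abs_lt]; constructor <;> nlinarith [hx1.1, hx1.2, hw1.1, hw1.2]
      rw [← Int.cast_abs] at habs
      have h4 : |m| < 1 := by exact_mod_cast habs
      have h5 := abs_lt.mp h4
      omega
  · -- W ⊆ annR 3
    rintro ⟨a, b⟩ ⟨_, hb⟩
    simp only [Set.mem_Ioo] at hb
    obtain ⟨h1, h2⟩ := hb
    have hp1 : (0 : ℝ) < (2 - ρ / 4) / q := div_pos (by nlinarith) hq0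
    have hp2 : (2 + ρ / 4) / (q : ℝ) ≤ 2 + ρ / 4 :=
      div_le_self (by positivity) hq1
    show |b| ≤ 3
    rw [abs_le]
    constructor <;> nlinarith
  · -- volume
    rw [hW, Measure.volume_eq_prod ℝ ℝ, Measure.prod_prod, Real.volume_Ioo, Real.volume_Ioo,
      ← ENNReal.ofReal_mul (by nlinarith)]
    congr 1
    field_simp
    ring
  · -- wandering
    intro k hk
    rw [Set.disjoint_left]
    rintro x ⟨p, hp, rfl⟩ hxs
    obtain ⟨m, ε, η, heq, he, hh, hs⟩ :=
      zIterGood hq hρ1 hUper hU' 2 k p (hWgood p hp)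
    obtain ⟨mm, hmm⟩ := hxs
    obtain ⟨_, hb⟩ := hmm
    obtain ⟨h1, h2⟩ := hb
    have hx2 : (zIter (Smap q U) (SmapInv q U) k p).2 = (((2 + k : ℤ) : ℝ) + η) / q := by
      rw [heq]
    rw [hx2] at h1 h2
    rw [div_lt_div_iff₀ hq0 hq0] at h1 h2
    have hA1 : (2 : ℝ) - ρ / 4 < ((2 + k : ℤ) : ℝ) + η :=
      lt_of_mul_lt_mul_right h1 (le_of_lt hq0)
    have hA2 : ((2 + k : ℤ) : ℝ) + η < 2 + ρ / 4 :=
      lt_of_mul_lt_mul_right h2 (le_of_lt hq0)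
    have hhe := abs_lt.mp hh
    clear heq hx2 h1 h2 hp hWgood hmemc hlt hconv
    have habs : |(k : ℝ)| < 1 := by
      rw [abs_lt]
      push_cast at hA1 hA2 ⊢
      constructor <;> linarith [hhe.1, hhe.2]
    rw [← Int.cast_abs] at habs
    have h4 : |k| < 1 := by exact_mod_cast habs
    have h5 := abs_lt.mp h4
    omega
end
end

section
/- Non-resonance lemma for unimodular eigenvalues close to 1. Let n ≥ 1 be an integer and let λ = exp(iγ₀) with γ₀ ∈ ℝ and −π/3 < γ₀ < 0. If |λ − 1| < 1/(n+1), then |λ − 1| ≤ |λ^p − 1| for every integer p with 1 ≤ p ≤ 2n+2. -/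
lemma abs_exp_mul_I_sub_one' (θ : ℝ) :
    ‖(Complex.exp (θ * Complex.I) - 1)‖ = 2 * |Real.sin (θ / 2)| := by
  have hcos : Real.cos θ = 1 - 2 * Real.sin (θ / 2) ^ 2 := by
    have h1 := Real.cos_two_mul (θ / 2)
    have h2 := Real.sin_sq_add_cos_sq (θ / 2)
    have h3 : Real.cos θ = Real.cos (2 * (θ / 2)) := by congr 1; ring
    nlinarith
  rw [Complex.exp_mul_I, ← Complex.ofReal_cos, ← Complex.ofReal_sin,
    Complex.norm_def, Complex.normSq_apply]
  have hre : ((Real.cos θ : ℂ) + (Real.sin θ : ℂ) * Complex.I - 1).re = Real.cos θ - 1 := by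
    simp [Complex.cos_ofReal_re, Complex.sin_ofReal_im]
  have him : ((Real.cos θ : ℂ) + (Real.sin θ : ℂ) * Complex.I - 1).im = Real.sin θ := by
    simp [Complex.sin_ofReal_re, Complex.cos_ofReal_im]
  rw [hre, him]
  have key : (Real.cos θ - 1) * (Real.cos θ - 1) + Real.sin θ * Real.sin θ
      = (2 * |Real.sin (θ / 2)|) ^ 2 := by
    have h2 := Real.sin_sq_add_cos_sq θ
    have : |Real.sin (θ / 2)| ^ 2 = Real.sin (θ / 2) ^ 2 := sq_abs _
    nlinarith
  rw [key, Real.sqrt_sq (by positivity)]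

/-- **Non-resonance lemma for unimodular eigenvalues close to 1**
(Lemma 3.14 of Lazzarini–Marco–Sauzin):  if `λ = exp(iγ₀)` with `-π/3 < γ₀ < 0` and
`|λ - 1| < 1/(n+1)`, then `|λ - 1| ≤ |λ^p - 1|` for `1 ≤ p ≤ 2n+2`. -/
theorem nonresonance_lemma
    (n : ℕ) (hn : 1 ≤ n) (γ₀ : ℝ)
    (hγ₁ : -(Real.pi / 3) < γ₀) (hγ₂ : γ₀ < 0)
    (hsmall : ‖Complex.exp (γ₀ * Complex.I) - 1‖ < 1 / ((n : ℝ) + 1)) :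
    ∀ p : ℕ, 1 ≤ p → p ≤ 2 * n + 2 →
      ‖Complex.exp (γ₀ * Complex.I) - 1‖ ≤
        ‖Complex.exp (γ₀ * Complex.I) ^ p - 1‖ := by
  intro p hp1 hp2
  have hpow : Complex.exp ((γ₀ : ℂ) * Complex.I) ^ p
      = Complex.exp (((p * γ₀ : ℝ) : ℂ) * Complex.I) := by
    rw [← Complex.exp_nat_mul]
    push_cast
    ring_nf
  rw [hpow, abs_exp_mul_I_sub_one', abs_exp_mul_I_sub_one'] at *
  set x : ℝ := -γ₀ / 2 with hx
  have hπ := Real.pi_pos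
  have hn0 : (0:ℝ) < (n : ℝ) + 1 := by positivity
  have hx0 : 0 < x := by simp [hx]; linarith
  have hx6 : x < Real.pi / 6 := by simp [hx]; linarith
  have hs1 : Real.sin (γ₀ / 2) = -Real.sin x := by
    rw [hx, ← Real.sin_neg]; ring_nf
  have hsinx0 : 0 < Real.sin x :=
    Real.sin_pos_of_pos_of_lt_pi hx0 (by linarith)
  have habs1 : |Real.sin (γ₀ / 2)| = Real.sin x := by
    rw [hs1, abs_neg, abs_of_pos hsinx0]
  rw [habs1] at hsmall ⊢
  -- clear denominators: 2*(n+1)*sin x < 1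
  have hsx : 2 * ((n : ℝ) + 1) * Real.sin x < 1 := by
    have h := (mul_lt_mul_iff_right₀ hn0).2 hsmall
    rw [mul_one_div, div_self hn0.ne'] at h
    linarith
  -- x ≤ (π/2) sin x
  have hxle : 2 / Real.pi * x ≤ Real.sin x :=
    Real.mul_le_sin hx0.le (by linarith)
  have heq : Real.pi / 2 * (2 / Real.pi * x) = x := by
    field_simp
  have h1 : x ≤ Real.pi / 2 * Real.sin x := by
    have := mul_le_mul_of_nonneg_left hxle (by positivity : (0:ℝ) ≤ Real.pi / 2)
    linarith
  have hxbound : 4 * ((n : ℝ) + 1) * x < Real.pi := by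
    nlinarith [mul_lt_mul_of_pos_left hsx hπ,
      mul_le_mul_of_nonneg_left h1 (by positivity : (0:ℝ) ≤ 4 * ((n : ℝ) + 1))]
  have hple : (p : ℝ) ≤ 2 * (n : ℝ) + 2 := by exact_mod_cast hp2
  have hpx : (p : ℝ) * x < Real.pi / 2 := by nlinarith
  have hxpx : x ≤ (p : ℝ) * x := by
    have h5 : (1 : ℝ) ≤ (p : ℝ) := by exact_mod_cast hp1
    nlinarith
  have hmono : Real.sin x ≤ Real.sin ((p : ℝ) * x) :=
    Real.sin_le_sin_of_le_of_le_pi_div_two (by linarith) hpx.le hxpx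
  have hs2 : Real.sin ((p : ℝ) * γ₀ / 2) = -Real.sin ((p : ℝ) * x) := by
    rw [← Real.sin_neg, hx]; ring_nf
  rw [hs2, abs_neg, abs_of_nonneg (by linarith)]
  linarith
end
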